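/- arXiv:2408.16087 — 8 statements merged into one kernel-verified Lean document; each statement's English description precedes it below -/
import Mathlib

section
/- Let A be a real m×d matrix, let P : ℝ^m → ℝ^m be the orthogonal projection onto the column space (range) of A, and let c > 0 satisfy ‖Aᵀv‖ ≥ c‖Pv‖ for all v ∈ ℝ^m. Let h : ℝ^m → ℝ be differentiable and μ-strongly convex with μ > 0. Then the function f(z) := h(Az) on ℝ^d is bounded below, and for every z ∈ ℝ^d it satisfies the Polyak–Łojasiewicz inequality ‖Aᵀ∇h(Az)‖² ≥ 2μc²·( f(z) − inf_{z'} f(z') ), where Aᵀ∇h(Az) is the gradient of f at z. -/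
/-!
Strong convexity at `x = A z` bounds `h` from below on the affine subspace `x + range A` by
`h x + ⟪g, u⟫ + μ/2 ‖u‖²` with `u ∈ range A`; on that subspace only the projection `P g` of the
gradient `g = ∇h(x)` is seen, and minimising over `u` gives `h(A z) - inf f ≤ ‖P g‖² / (2μ)`.
The assumption `c ‖P g‖ ≤ ‖Aᵀ g‖` then turns this into the PL inequality, since `Aᵀ g` is the
gradient of `f` at `z` by the chain rule.
-/

open Matrix

section StrongConvexity

variable {E : Type*} [NormedAddCommGroup E] [InnerProductSpace ℝ E] {μ : ℝ}

theorem neg_norm_sq_div_le_inner_add_mul_norm_sq (hμ : 0 < μ) (a u : E) :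
    -(‖a‖ ^ 2 / (2 * μ)) ≤ inner ℝ a u + μ / 2 * ‖u‖ ^ 2 := by
  have hsq : 0 ≤ ‖a + μ • u‖ ^ 2 / (2 * μ) := by positivity
  rw [norm_add_sq_real, inner_smul_right, norm_smul, Real.norm_of_nonneg hμ.le] at hsq
  have hexpand : (‖a‖ ^ 2 + 2 * (μ * inner ℝ a u) + (μ * ‖u‖) ^ 2) / (2 * μ)
      = ‖a‖ ^ 2 / (2 * μ) + (inner ℝ a u + μ / 2 * ‖u‖ ^ 2) := by
    field_simp
    ring
  linarith

variable {h : E → ℝ} {h' : E → E}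

theorem sub_norm_starProjection_sq_div_le_of_sub_mem (K : Submodule ℝ E)
    [K.HasOrthogonalProjection] (hμ : 0 < μ)
    (hsc : ∀ x y, h x + inner ℝ (h' x) (y - x) + μ / 2 * ‖y - x‖ ^ 2 ≤ h y)
    {x y : E} (hxy : y - x ∈ K) :
    h x - ‖K.starProjection (h' x)‖ ^ 2 / (2 * μ) ≤ h y := by
  have hproj : inner ℝ (h' x) (y - x) = inner ℝ (K.starProjection (h' x)) (y - x) := by
    rw [Submodule.inner_starProjection_left_eq_right, Submodule.starProjection_eq_self_iff.mpr hxy]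
  have := neg_norm_sq_div_le_inner_add_mul_norm_sq hμ (K.starProjection (h' x)) (y - x)
  linarith [hsc x y]

end StrongConvexity

section LinearComposition

variable {E F : Type*} [NormedAddCommGroup E] [InnerProductSpace ℝ E] [FiniteDimensional ℝ E]
  [NormedAddCommGroup F] [InnerProductSpace ℝ F]

theorem HasGradientAt.comp_linearMap [FiniteDimensional ℝ F] (T : E →ₗ[ℝ] F) {h : F → ℝ}
    {g : F} {x : E} (hh : HasGradientAt h g (T x)) :
    HasGradientAt (fun z => h (T z)) (T.adjoint g) x := by
  have hcomp := hh.hasFDerivAt.comp x (LinearMap.toContinuousLinearMap T).hasFDerivAt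
  have hdual : (InnerProductSpace.toDual ℝ F g : StrongDual ℝ F).comp
      (LinearMap.toContinuousLinearMap T) = InnerProductSpace.toDual ℝ E (T.adjoint g) := by
    ext u
    simp [LinearMap.adjoint_inner_left]
  rw [hdual] at hcomp
  exact hasGradientAt_iff_hasFDerivAt.mpr hcomp

variable {μ : ℝ} {h : F → ℝ} {h' : F → F}

theorem bddBelow_range_comp_linearMap (T : E →ₗ[ℝ] F) (hμ : 0 < μ)
    (hsc : ∀ x y, h x + inner ℝ (h' x) (y - x) + μ / 2 * ‖y - x‖ ^ 2 ≤ h y) :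
    BddBelow (Set.range fun z => h (T z)) := by
  refine ⟨h (T 0) - ‖(LinearMap.range T).starProjection (h' (T 0))‖ ^ 2 / (2 * μ), ?_⟩
  rintro _ ⟨z, rfl⟩
  exact sub_norm_starProjection_sq_div_le_of_sub_mem _ hμ hsc (by simp)

theorem sub_iInf_comp_linearMap_le (T : E →ₗ[ℝ] F) (hμ : 0 < μ)
    (hsc : ∀ x y, h x + inner ℝ (h' x) (y - x) + μ / 2 * ‖y - x‖ ^ 2 ≤ h y) (z : E) :
    h (T z) - ⨅ z', h (T z') ≤ ‖(LinearMap.range T).starProjection (h' (T z))‖ ^ 2 / (2 * μ) := by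
  have hinf : h (T z) - ‖(LinearMap.range T).starProjection (h' (T z))‖ ^ 2 / (2 * μ)
      ≤ ⨅ z', h (T z') :=
    le_ciInf fun z' => sub_norm_starProjection_sq_div_le_of_sub_mem _ hμ hsc
      (by rw [← map_sub]; exact LinearMap.mem_range_self T _)
  linarith

theorem mul_sub_iInf_comp_linearMap_le_norm_adjoint_sq [FiniteDimensional ℝ F] (T : E →ₗ[ℝ] F)
    {c : ℝ} (hc : 0 ≤ c) (hμ : 0 < μ)
    (hT : ∀ v, c * ‖(LinearMap.range T).starProjection v‖ ≤ ‖T.adjoint v‖)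
    (hsc : ∀ x y, h x + inner ℝ (h' x) (y - x) + μ / 2 * ‖y - x‖ ^ 2 ≤ h y) (z : E) :
    2 * μ * c ^ 2 * (h (T z) - ⨅ z', h (T z')) ≤ ‖T.adjoint (h' (T z))‖ ^ 2 := by
  set Pg := (LinearMap.range T).starProjection (h' (T z))
  calc 2 * μ * c ^ 2 * (h (T z) - ⨅ z', h (T z'))
      ≤ 2 * μ * c ^ 2 * (‖Pg‖ ^ 2 / (2 * μ)) := by
        gcongr
        exact sub_iInf_comp_linearMap_le T hμ hsc z
    _ = (c * ‖Pg‖) ^ 2 := by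
        field_simp
    _ ≤ ‖T.adjoint (h' (T z))‖ ^ 2 := by
        gcongr
        exact hT _

end LinearComposition

theorem Matrix.toEuclideanLin_transpose_eq_adjoint {m n : Type*} [Fintype m] [DecidableEq m]
    [Fintype n] [DecidableEq n] (A : Matrix m n ℝ) :
    Aᵀ.toEuclideanLin = A.toEuclideanLin.adjoint := by
  rw [← conjTranspose_eq_transpose_of_trivial, toEuclideanLin_conjTranspose_eq_adjoint]

/-- **Observation 2, part 1.**
A `μ`-strongly convex differentiable function `h` composed with a linear map `A`
(with `c > 0` a lower bound of the type `‖Aᵀ v‖ ≥ c ‖P v‖`, where `P` is the orthogonal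
projection onto the column space of `A`, i.e. `c` plays the role of the smallest nonzero
singular value of `A`) yields a function `f z = h (A z)` that is bounded below and satisfies
the Polyak–Łojasiewicz inequality with constant `μ c²`; moreover `Aᵀ ∇h(Az)` is the gradient
of `f` at `z`. -/
theorem stmt_0 {m d : ℕ} (A : Matrix (Fin m) (Fin d) ℝ) (c μ : ℝ)
    (hc : 0 < c) (hμ : 0 < μ)
    (hA : ∀ v : EuclideanSpace ℝ (Fin m),
      c * ‖(Submodule.orthogonalProjectionOnto (LinearMap.range (Matrix.toEuclideanLin A)) v :
        EuclideanSpace ℝ (Fin m))‖ ≤ ‖Matrix.toEuclideanLin Aᵀ v‖)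
    (h : EuclideanSpace ℝ (Fin m) → ℝ)
    (h' : EuclideanSpace ℝ (Fin m) → EuclideanSpace ℝ (Fin m))
    (hgrad : ∀ x, HasGradientAt h (h' x) x)
    (hsc : ∀ x y : EuclideanSpace ℝ (Fin m),
      h x + inner ℝ (h' x) (y - x) + μ / 2 * ‖y - x‖ ^ 2 ≤ h y) :
    BddBelow (Set.range fun z : EuclideanSpace ℝ (Fin d) => h (Matrix.toEuclideanLin A z)) ∧
    ∀ z : EuclideanSpace ℝ (Fin d),
      HasGradientAt (fun z' => h (Matrix.toEuclideanLin A z'))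
        (Matrix.toEuclideanLin Aᵀ (h' (Matrix.toEuclideanLin A z))) z ∧
      2 * μ * c ^ 2 *
          (h (Matrix.toEuclideanLin A z) -
            ⨅ z' : EuclideanSpace ℝ (Fin d), h (Matrix.toEuclideanLin A z')) ≤
        ‖Matrix.toEuclideanLin Aᵀ (h' (Matrix.toEuclideanLin A z))‖ ^ 2 := by
  simp only [← Submodule.starProjection_apply, toEuclideanLin_transpose_eq_adjoint] at hA ⊢
  exact ⟨bddBelow_range_comp_linearMap _ hμ hsc, fun z =>
    ⟨(hgrad _).comp_linearMap _,
      mul_sub_iInf_comp_linearMap_le_norm_adjoint_sq _ hc.le hμ hA hsc z⟩⟩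
end

section
/- Let g : ℝ^{d₁} × ℝ^{d₂} → ℝ be differentiable, set g*(u) := inf_v g(u,v), and assume g*(u) is finite for every u and that g* is differentiable on ℝ^{d₁}. Let μ_g > 0 be such that ‖∇_v g(u,v)‖² ≥ 2μ_g·(g(u,v) − g*(u)) for all (u,v) (g(u,·) is μ_g-PL over v). Fix γ > 0 and define p(u,v) := γ(g(u,v) − g*(u)). Then p ≥ 0 with inf_{(u,v)} p(u,v) = 0, and (i) joint PL: ‖∇p(u,v)‖² ≥ γμ_g·(p(u,v) − inf_{(u',v')} p(u',v')) for all (u,v), where ∇p is the full gradient in (u,v); (ii) blockwise PL over v: for every u, inf_{v'} p(u,v') = 0 and ‖∇_v p(u,v)‖² ≥ 2γμ_g·(p(u,v) − inf_{v'} p(u,v')). -/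
/-- **Observation 1.**
If `g(u,·)` is `μ_g`-PL over `v` for every `u`, with finite value function
`g*(u) = ⨅ v, g u v` which is differentiable with gradient `gstar'`, then the penalty term
`p(u,v) = γ (g(u,v) - g*(u))` is nonnegative with infimum `0`, is jointly PL over `(u,v)`
(with `‖∇p‖² = ‖∇_u p‖² + ‖∇_v p‖²`, `∇_u p = γ(∇_u g - ∇g*)`, `∇_v p = γ ∇_v g`), and is
blockwise PL over `v`. -/
theorem stmt_2 {d₁ d₂ : ℕ}
    (g : EuclideanSpace ℝ (Fin d₁) → EuclideanSpace ℝ (Fin d₂) → ℝ)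
    (gu : EuclideanSpace ℝ (Fin d₁) → EuclideanSpace ℝ (Fin d₂) → EuclideanSpace ℝ (Fin d₁))
    (gv : EuclideanSpace ℝ (Fin d₁) → EuclideanSpace ℝ (Fin d₂) → EuclideanSpace ℝ (Fin d₂))
    (gstar' : EuclideanSpace ℝ (Fin d₁) → EuclideanSpace ℝ (Fin d₁))
    (hdiff : Differentiable ℝ (fun q : EuclideanSpace ℝ (Fin d₁) × EuclideanSpace ℝ (Fin d₂) =>
      g q.1 q.2))
    (hgu : ∀ u v, HasGradientAt (fun u' => g u' v) (gu u v) u)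
    (hgv : ∀ u v, HasGradientAt (fun v' => g u v') (gv u v) v)
    (hbdd : ∀ u, BddBelow (Set.range (g u)))
    (hgstar : ∀ u, HasGradientAt (fun u' => ⨅ v', g u' v') (gstar' u) u)
    (μg γ : ℝ) (hμg : 0 < μg) (hγ : 0 < γ)
    (hPL : ∀ u v, 2 * μg * (g u v - ⨅ v', g u v') ≤ ‖gv u v‖ ^ 2) :
    -- the penalty `p(u,v) = γ (g(u,v) - g*(u))` is nonnegative ...
    (∀ u v, 0 ≤ γ * (g u v - ⨅ v', g u v')) ∧
    -- ... with infimum `0` over all `(u,v)` ...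
    (⨅ q : EuclideanSpace ℝ (Fin d₁) × EuclideanSpace ℝ (Fin d₂),
      γ * (g q.1 q.2 - ⨅ v', g q.1 v')) = 0 ∧
    -- (i) joint PL with constant `γ μ_g / 2`, i.e. `‖∇p(u,v)‖² ≥ γ μ_g (p(u,v) - inf p)`
    (∀ u v,
      γ * μg * (γ * (g u v - ⨅ v', g u v') -
          ⨅ q : EuclideanSpace ℝ (Fin d₁) × EuclideanSpace ℝ (Fin d₂),
            γ * (g q.1 q.2 - ⨅ v', g q.1 v')) ≤
        ‖γ • (gu u v - gstar' u)‖ ^ 2 + ‖γ • gv u v‖ ^ 2) ∧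
    -- (ii) blockwise PL over `v`: for every `u`, `inf_{v'} p(u,v') = 0` ...
    (∀ u, (⨅ v' : EuclideanSpace ℝ (Fin d₂), γ * (g u v' - ⨅ v'', g u v'')) = 0) ∧
    -- ... and `‖∇_v p(u,v)‖² ≥ 2 γ μ_g (p(u,v) - inf_{v'} p(u,v'))`
    (∀ u v,
      2 * γ * μg * (γ * (g u v - ⨅ v', g u v') -
          ⨅ v' : EuclideanSpace ℝ (Fin d₂), γ * (g u v' - ⨅ v'', g u v'')) ≤
        ‖γ • gv u v‖ ^ 2) := by

  have hp0 : ∀ u v, 0 ≤ γ * (g u v - ⨅ v', g u v') := fun u v =>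
    mul_nonneg hγ.le (sub_nonneg.2 (ciInf_le (hbdd u) v))
  have hbddp : ∀ u, BddBelow (Set.range (fun v => γ * (g u v - ⨅ v', g u v'))) := by
    intro u
    exact ⟨0, by rintro x ⟨v, rfl⟩; exact hp0 u v⟩
  have hinfu : ∀ u, (⨅ v' : EuclideanSpace ℝ (Fin d₂), γ * (g u v' - ⨅ v'', g u v'')) = 0 := by
    intro u
    refine le_antisymm ?_ (le_ciInf (hp0 u))
    by_contra h
    push_neg at h
    set a := ⨅ v' : EuclideanSpace ℝ (Fin d₂), γ * (g u v' - ⨅ v'', g u v'') with ha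
    have hle : ∀ v, a ≤ γ * (g u v - ⨅ v'', g u v'') := fun v => ciInf_le (hbddp u) v
    have : (⨅ v'', g u v'') + a / γ ≤ ⨅ v'', g u v'' := by
      refine le_ciInf fun v => ?_
      have h2 : a / γ ≤ g u v - ⨅ v'', g u v'' := (div_le_iff₀ hγ).mpr (by linarith [hle v])
      linarith
    nlinarith [div_pos h hγ]
  have hinfq : (⨅ q : EuclideanSpace ℝ (Fin d₁) × EuclideanSpace ℝ (Fin d₂),
      γ * (g q.1 q.2 - ⨅ v', g q.1 v')) = 0 := by
    refine le_antisymm ?_ (le_ciInf fun q => hp0 q.1 q.2)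
    have hbq : BddBelow (Set.range (fun q : EuclideanSpace ℝ (Fin d₁) × EuclideanSpace ℝ (Fin d₂) =>
        γ * (g q.1 q.2 - ⨅ v', g q.1 v'))) := ⟨0, by rintro x ⟨q, rfl⟩; exact hp0 q.1 q.2⟩
    calc (⨅ q : EuclideanSpace ℝ (Fin d₁) × EuclideanSpace ℝ (Fin d₂),
        γ * (g q.1 q.2 - ⨅ v', g q.1 v'))
        ≤ ⨅ v' : EuclideanSpace ℝ (Fin d₂), γ * (g 0 v' - ⨅ v'', g 0 v'') := by
          refine le_ciInf fun v => ciInf_le hbq (0, v)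
      _ = 0 := hinfu 0
  have hns : ∀ {E : Type} [inst : NormedAddCommGroup E] [inst2 : NormedSpace ℝ E] (x : E),
      ‖γ • x‖ ^ 2 = γ ^ 2 * ‖x‖ ^ 2 := by
    intro E _ _ x
    rw [norm_smul, Real.norm_eq_abs, mul_pow, sq_abs]
  refine ⟨hp0, hinfq, ?_, hinfu, ?_⟩
  · intro u v
    rw [hinfq, hns, hns]
    nlinarith [hPL u v, sub_nonneg.2 (ciInf_le (hbdd u) v), sq_nonneg ‖gu u v - gstar' u‖,
      mul_pos hγ hμg, sq_nonneg γ, mul_nonneg (sq_nonneg γ) (sq_nonneg ‖gu u v - gstar' u‖)]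
  · intro u v
    rw [hinfu u, hns]
    nlinarith [hPL u v, sub_nonneg.2 (ciInf_le (hbdd u) v), sq_nonneg γ, mul_pos hγ hμg]
end

section
/- Define F : ℝ → ℝ by F(u) = (1/2)(u − sin u)². Then inf F = 0, yet F does not satisfy the PL condition: there is no μ > 0 such that (F′(u))² ≥ 2μ(F(u) − inf F) holds for all u ∈ ℝ. In particular, F′(u) = (u − sin u)(1 − cos u), so F′(2π) = 0 while F(2π) = 2π² > 0. -/
/-! Under the PL inequality every critical point is a global minimiser. But the critical point
`u = 2π` of `F` (where `1 - cos u = 0`) has `F(2π) = 2π² > 0 = inf F`, attained at `u = 0`. -/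

/-- The nested bilevel objective `F(u) = ½(u - sin u)²` of Example 1. -/
noncomputable def FEx1 : ℝ → ℝ := fun u => 1 / 2 * (u - Real.sin u) ^ 2

open Real

def PolyakLojasiewicz (f : ℝ → ℝ) (μ : ℝ) : Prop :=
  ∀ u, 2 * μ * (f u - ⨅ u', f u') ≤ deriv f u ^ 2

theorem not_polyakLojasiewicz_of_deriv_eq_zero {f : ℝ → ℝ} {x μ : ℝ} (hμ : 0 < μ)
    (hx : deriv f x = 0) (hfx : ⨅ u, f u < f x) : ¬ PolyakLojasiewicz f μ := fun hPL => by
  have := hPL x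
  rw [hx] at this
  nlinarith [mul_pos hμ (sub_pos.2 hfx)]

theorem hasDerivAt_FEx1 (u : ℝ) :
    HasDerivAt FEx1 ((u - sin u) * (1 - cos u)) u := by
  have h := (((hasDerivAt_id' u).fun_sub (hasDerivAt_sin u)).fun_pow 2).const_mul (1 / 2 : ℝ)
  exact h.congr_deriv (by ring)

theorem FEx1_nonneg (u : ℝ) : 0 ≤ FEx1 u := by
  unfold FEx1
  positivity

theorem iInf_FEx1 : ⨅ u, FEx1 u = 0 :=
  IsLeast.csInf_eq ⟨⟨0, by simp [FEx1]⟩, Set.forall_mem_range.2 FEx1_nonneg⟩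

theorem FEx1_two_pi : FEx1 (2 * π) = 2 * π ^ 2 := by
  simp only [FEx1, sin_two_pi]
  ring

/-- **Example 1, failure of PL for the nested objective.**
`F(u) = ½(u - sin u)²` has infimum `0`, derivative `F'(u) = (u - sin u)(1 - cos u)`,
with `F'(2π) = 0` while `F(2π) = 2π² > 0`; consequently there is no `μ > 0` such that
`(F'(u))² ≥ 2μ (F(u) - inf F)` holds for all `u`. -/
theorem stmt_4 :
    (⨅ u : ℝ, FEx1 u) = 0 ∧
    (∀ u : ℝ, deriv FEx1 u = (u - Real.sin u) * (1 - Real.cos u)) ∧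
    deriv FEx1 (2 * Real.pi) = 0 ∧
    FEx1 (2 * Real.pi) = 2 * Real.pi ^ 2 ∧
    0 < FEx1 (2 * Real.pi) ∧
    ¬ ∃ μ : ℝ, 0 < μ ∧ ∀ u : ℝ,
      2 * μ * (FEx1 u - ⨅ u' : ℝ, FEx1 u') ≤ (deriv FEx1 u) ^ 2 := by
  have deriv_FEx1 (u : ℝ) := (hasDerivAt_FEx1 u).deriv
  have critical : deriv FEx1 (2 * π) = 0 := by simp [deriv_FEx1]
  have positive : 0 < FEx1 (2 * π) := by rw [FEx1_two_pi]; positivity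
  refine ⟨iInf_FEx1, deriv_FEx1, critical, FEx1_two_pi, positive, ?_⟩
  rintro ⟨μ, hμ, hPL⟩
  exact not_polyakLojasiewicz_of_deriv_eq_zero hμ critical (iInf_FEx1 ▸ positive) hPL
end

section
/- For every u ∈ ℝ there exists a unique v ∈ ℝ such that 4(u+v)³ + e^v = 0; write S(u) for this unique solution. Then S(−(1/4)^{1/3}) = 0, S(−(e/4)^{1/3} − 1) = 1, and at the midpoint ū = (−(1/4)^{1/3} + (−(e/4)^{1/3} − 1))/2 one has S(ū) > 1/2. Consequently S is not a convex function on ℝ. -/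
private lemma fmono6 (u : ℝ) : StrictMono (fun v : ℝ => 4 * (u + v) ^ 3 + Real.exp v) := by
  have h3 : StrictMono (fun x : ℝ => x ^ 3) := Odd.strictMono_pow ⟨1, rfl⟩
  have h2 : StrictMono (fun v : ℝ => u + v) := fun a b hab => by simpa using hab
  exact ((h3.comp h2).const_mul (by norm_num)).add Real.exp_strictMono

private lemma fexun (u : ℝ) : ∃! v : ℝ, 4 * (u + v) ^ 3 + Real.exp v = 0 := by
  have hc : Continuous fun v : ℝ => 4 * (u + v) ^ 3 + Real.exp v := by continuity
  have hab : (-|u| - 1 : ℝ) ≤ |u| := by nlinarith [abs_nonneg u]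
  have h0 : (0:ℝ) ∈ Set.Icc (4 * (u + (-|u| - 1)) ^ 3 + Real.exp (-|u| - 1))
      (4 * (u + |u|) ^ 3 + Real.exp |u|) := by
    constructor
    · have h1 : u + (-|u| - 1) ≤ -1 := by nlinarith [le_abs_self u]
      have he : Real.exp (-|u| - 1) ≤ 1 := by
        rw [Real.exp_le_one_iff]; nlinarith [abs_nonneg u]
      nlinarith [sq_nonneg (u + (-|u| - 1) + 1), sq_nonneg (u + (-|u| - 1))]
    · have h1 : 0 ≤ u + |u| := by nlinarith [neg_abs_le u]
      nlinarith [Real.exp_pos |u|, pow_nonneg h1 3]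
  obtain ⟨v, _, hv⟩ := intermediate_value_Icc hab hc.continuousOn h0
  exact ⟨v, hv, fun w hw => (fmono6 u).injective (hw.trans hv.symm)⟩

/-- **Example 2 (Appendix C.3).**
For every `u` there is a unique `v` with `4(u+v)³ + eᵛ = 0`; writing `S u` for this
solution (i.e. for any function `S` satisfying the defining equation), one has
`S(-(1/4)^{1/3}) = 0`, `S(-(e/4)^{1/3} - 1) = 1`, at the midpoint `ū` of those two
arguments `S(ū) > 1/2`, and consequently `S` is not convex on `ℝ`. -/
theorem stmt_6 :
    (∀ u : ℝ, ∃! v : ℝ, 4 * (u + v) ^ 3 + Real.exp v = 0) ∧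
    ∀ S : ℝ → ℝ, (∀ u : ℝ, 4 * (u + S u) ^ 3 + Real.exp (S u) = 0) →
      S (-(1 / 4 : ℝ) ^ ((1 : ℝ) / 3)) = 0 ∧
      S (-(Real.exp 1 / 4) ^ ((1 : ℝ) / 3) - 1) = 1 ∧
      1 / 2 < S ((-(1 / 4 : ℝ) ^ ((1 : ℝ) / 3) +
        (-(Real.exp 1 / 4) ^ ((1 : ℝ) / 3) - 1)) / 2) ∧
      ¬ ConvexOn ℝ Set.univ S := by
  refine ⟨fexun, fun S hS => ?_⟩
  set a : ℝ := (1 / 4 : ℝ) ^ ((1 : ℝ) / 3) with ha_def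
  set b : ℝ := (Real.exp 1 / 4) ^ ((1 : ℝ) / 3) with hb_def
  set c : ℝ := Real.exp (1 / 6) with hc_def
  have ha3 : a ^ 3 = 1 / 4 := by
    rw [ha_def, ← Real.rpow_natCast ((1/4:ℝ) ^ ((1:ℝ)/3)) 3,
      ← Real.rpow_mul (by norm_num : (0:ℝ) ≤ 1/4)]
    norm_num
  have hb3 : b ^ 3 = Real.exp 1 / 4 := by
    rw [hb_def, ← Real.rpow_natCast ((Real.exp 1/4) ^ ((1:ℝ)/3)) 3,
      ← Real.rpow_mul (by positivity)]
    norm_num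
  have hc6 : c ^ 6 = Real.exp 1 := by
    rw [hc_def, ← Real.exp_nat_mul]; norm_num
  have hc3 : c ^ 3 = Real.exp (1 / 2) := by
    rw [hc_def, ← Real.exp_nat_mul]; norm_num
  have hc1 : 1 < c := by
    rw [hc_def, show (1:ℝ) = Real.exp 0 by simp]
    exact Real.exp_lt_exp.mpr (by norm_num)
  have hb_eq : b = c ^ 2 * a := by
    refine (Odd.strictMono_pow (R := ℝ) ⟨1, rfl⟩).injective ?_
    show b ^ 3 = (c ^ 2 * a) ^ 3
    linear_combination hb3 - a ^ 3 * hc6 - Real.exp 1 * ha3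
  -- value at u₁
  have hS1 : S (-a) = 0 := by
    refine (fmono6 (-a)).injective ?_
    show 4 * (-a + S (-a)) ^ 3 + Real.exp (S (-a)) = 4 * (-a + 0) ^ 3 + Real.exp 0
    rw [hS (-a), Real.exp_zero]
    linear_combination 4 * ha3
  -- value at u₂
  have hS2 : S (-b - 1) = 1 := by
    refine (fmono6 (-b - 1)).injective ?_
    show 4 * (-b - 1 + S (-b - 1)) ^ 3 + Real.exp (S (-b - 1)) =
      4 * (-b - 1 + 1) ^ 3 + Real.exp 1
    rw [hS (-b - 1)]
    linear_combination 4 * hb3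
  -- midpoint
  set m : ℝ := (-a + (-b - 1)) / 2 with hm_def
  have h2c : (2 * c) ^ 3 < (1 + c ^ 2) ^ 3 := by
    apply pow_lt_pow_left₀ _ (by positivity) (by norm_num)
    nlinarith [pow_pos (by linarith : (0:ℝ) < c - 1) 2]
  have hEq : 4 * (m + 1 / 2) ^ 3 + c ^ 3 = (8 * c ^ 3 - (1 + c ^ 2) ^ 3) / 8 := by
    rw [hm_def, hb_eq]
    linear_combination (-(1 + c ^ 2) ^ 3 / 2) * ha3
  have key : 4 * (m + 1 / 2) ^ 3 + Real.exp (1 / 2) < 0 := by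
    rw [← hc3, hEq]; nlinarith [h2c]
  have hmid : 1 / 2 < S m := by
    refine (fmono6 m).lt_iff_lt.mp ?_
    show 4 * (m + 1 / 2) ^ 3 + Real.exp (1 / 2) <
      4 * (m + S m) ^ 3 + Real.exp (S m)
    rw [hS m]; exact key
  refine ⟨hS1, hS2, hmid, fun hconv => ?_⟩
  have := hconv.2 (Set.mem_univ (-a)) (Set.mem_univ (-b - 1))
    (by norm_num : (0:ℝ) ≤ 1/2) (by norm_num : (0:ℝ) ≤ 1/2) (by norm_num)
  rw [smul_eq_mul, smul_eq_mul, smul_eq_mul, smul_eq_mul, hS1, hS2,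
    show (1/2 : ℝ) * (-a) + 1/2 * (-b - 1) = m by rw [hm_def]; ring] at this
  linarith
end

section
/- Let ψ(x) = 1/(1 + e^{−x}) be the sigmoid function. Then: (i) ψ′(x) = ψ(x)(1 − ψ(x)) and ψ″(x) = ψ(x)(1 − ψ(x))(1 − 2ψ(x)) ≤ 1 for all x ∈ ℝ (so ψ is 1-smooth); (ii) for every ū > 0 and every x ∈ [−ū, ū], ψ′(x)² ≥ ψ(ū)(1 − ψ(ū))²·ψ(x). In particular, since inf_{x∈ℝ} ψ(x) = 0, the sigmoid satisfies the PL condition on [−ū, ū] with constant ψ(ū)(1 − ψ(ū))²/2. -/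
/-! Writing `s = ψ(x) ∈ (0, 1)`, both derivatives are polynomials in `s` whose factors lie in
`[-1, 1]`, and `ψ'² = s(1 - s)² · s`; the infimum `0` is the limit at `-∞`.
On `[-ū, ū]` the value `s` ranges over `[1 - ψ(ū), ψ(ū)]` by monotonicity and `ψ(-x) = 1 - ψ(x)`,
and the cubic `s(1 - s)²` attains its minimum over that interval at the right endpoint. -/

/-- The sigmoid function `ψ(x) = 1/(1 + e^{-x})`. -/
noncomputable def sigmoid : ℝ → ℝ := fun x => 1 / (1 + Real.exp (-x))

lemma sigmoid_eq_real_sigmoid : sigmoid = Real.sigmoid :=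
  funext fun _ => one_div _

lemma mul_one_sub_sq_le_of_mem_Icc {a t : ℝ} (ha : a ≤ 1) (ht : t ∈ Set.Icc (1 - a) a) :
    a * (1 - a) ^ 2 ≤ t * (1 - t) ^ 2 := by
  obtain ⟨hlo, hhi⟩ := ht
  -- `t(1-t)² - a(1-a)² = (t - a) q(t)` with `q` convex and `q ≤ 0` at both ends of `[1 - a, a]`.
  have hq : t ^ 2 + t * a + a ^ 2 - 2 * (t + a) + 1 ≤ 0 := by
    nlinarith [mul_nonneg (sub_nonneg.mpr hlo) (sub_nonneg.mpr hhi)]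
  nlinarith [mul_nonneg (sub_nonneg.mpr hhi) (neg_nonneg.mpr hq)]

namespace Real

lemma deriv_deriv_sigmoid (x : ℝ) :
    deriv (deriv sigmoid) x = sigmoid x * (1 - sigmoid x) * (1 - 2 * sigmoid x) := by
  rw [deriv_sigmoid]
  have h := (hasDerivAt_sigmoid x).fun_mul ((hasDerivAt_sigmoid x).const_sub 1)
  rw [h.deriv]
  ring

lemma deriv_deriv_sigmoid_le_one (x : ℝ) : deriv (deriv sigmoid) x ≤ 1 := by
  rw [deriv_deriv_sigmoid]
  nlinarith [sigmoid_pos x, sigmoid_lt_one x, sq_nonneg (1 - 2 * sigmoid x)]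

lemma iInf_sigmoid : ⨅ x, sigmoid x = 0 :=
  (isGLB_of_tendsto_atBot sigmoid_monotone tendsto_sigmoid_atBot).ciInf_eq

lemma sigmoid_mul_one_sub_sq_le_of_mem_Icc {u x : ℝ} (hx : x ∈ Set.Icc (-u) u) :
    sigmoid u * (1 - sigmoid u) ^ 2 ≤ sigmoid x * (1 - sigmoid x) ^ 2 := by
  refine mul_one_sub_sq_le_of_mem_Icc (sigmoid_le_one u) ⟨?_, sigmoid_le hx.2⟩
  rw [← sigmoid_neg]
  exact sigmoid_le hx.1

lemma sigmoid_mul_one_sub_sq_mul_le_deriv_sigmoid_sq {u x : ℝ} (hx : x ∈ Set.Icc (-u) u) :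
    sigmoid u * (1 - sigmoid u) ^ 2 * sigmoid x ≤ deriv sigmoid x ^ 2 :=
  calc sigmoid u * (1 - sigmoid u) ^ 2 * sigmoid x
      ≤ sigmoid x * (1 - sigmoid x) ^ 2 * sigmoid x :=
        mul_le_mul_of_nonneg_right (sigmoid_mul_one_sub_sq_le_of_mem_Icc hx) (sigmoid_nonneg x)
    _ = deriv sigmoid x ^ 2 := by rw [deriv_sigmoid]; ring

end Real

/-- **Smoothness and PL property of the sigmoid (proof of Lemma 3).**
`ψ'(x) = ψ(x)(1 - ψ(x))`, `ψ''(x) = ψ(x)(1 - ψ(x))(1 - 2ψ(x)) ≤ 1` (so `ψ` is `1`-smooth);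
`inf ψ = 0`; and for every `ub > 0` and `x ∈ [-ub, ub]`,
`ψ'(x)² ≥ ψ(ub)(1 - ψ(ub))² ψ(x)`, i.e. the sigmoid satisfies the PL condition on `[-ub, ub]`
with constant `ψ(ub)(1 - ψ(ub))²/2`. -/
theorem stmt_7 :
    (∀ x : ℝ, deriv sigmoid x = sigmoid x * (1 - sigmoid x)) ∧
    (∀ x : ℝ, deriv (deriv sigmoid) x =
      sigmoid x * (1 - sigmoid x) * (1 - 2 * sigmoid x)) ∧
    (∀ x : ℝ, deriv (deriv sigmoid) x ≤ 1) ∧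
    (⨅ x : ℝ, sigmoid x) = 0 ∧
    ∀ ub : ℝ, 0 < ub → ∀ x ∈ Set.Icc (-ub) ub,
      sigmoid ub * (1 - sigmoid ub) ^ 2 * sigmoid x ≤ (deriv sigmoid x) ^ 2 ∧
      2 * (sigmoid ub * (1 - sigmoid ub) ^ 2 / 2) * (sigmoid x - ⨅ y : ℝ, sigmoid y) ≤
        (deriv sigmoid x) ^ 2 := by
  rw [sigmoid_eq_real_sigmoid]
  refine ⟨fun x => congrFun Real.deriv_sigmoid x, Real.deriv_deriv_sigmoid,
    Real.deriv_deriv_sigmoid_le_one, Real.iInf_sigmoid, fun ub _ x hx => ⟨?_, ?_⟩⟩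
  · exact Real.sigmoid_mul_one_sub_sq_mul_le_deriv_sigmoid_sq hx
  · rw [Real.iInf_sigmoid, sub_zero, mul_div_cancel₀ _ two_ne_zero]
    exact Real.sigmoid_mul_one_sub_sq_mul_le_deriv_sigmoid_sq hx
end

section
/- Let X ∈ ℝ^{p×m} and Y ∈ ℝ^{p×n} be real matrices, let h ≥ m, and let P : ℝ^p → ℝ^p be the orthogonal projection onto the column space of X. Suppose c_X ≥ 0 satisfies ‖Xᵀv‖ ≥ c_X‖Pv‖ for all v ∈ ℝ^p. Let W₁ ∈ ℝ^{m×h} and W₂ ∈ ℝ^{h×n}, and suppose c₁, c₂ ≥ 0 satisfy ‖W₁ᵀx‖ ≥ c₁‖x‖ for all x ∈ ℝ^m and ‖W₂y‖ ≥ c₂‖y‖ for all y ∈ ℝ^n. Set R := XW₁W₂ − Y and L(W₁,W₂) := (1/2)‖R‖_F². Then ‖XᵀRW₂ᵀ‖_F² + ‖W₁ᵀXᵀR‖_F² ≥ 2(c₁² + c₂²)c_X²·( L(W₁,W₂) − inf_{W₁′∈ℝ^{m×h}, W₂′∈ℝ^{h×n}} (1/2)‖XW₁′W₂′ − Y‖_F²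 ). Moreover, since h ≥ m, the infimum over factored pairs equals inf_{W∈ℝ^{m×n}} (1/2)‖XW − Y‖_F². -/
/-!
Write `P` for the orthogonal projection onto the column space `K` of `X`. For every `W`, the
`Kᗮ`-part of each column `Xw - y` of `XW - Y` is `-Pᗮ y`, independent of `W`, while its `K`-part
vanishes when `W` is chosen columnwise with `Xw = P y`. Hence `inf ½‖XW - Y‖_F² = ½ Σⱼ ‖Pᗮ yⱼ‖²`,
and the suboptimality gap of `R = XW₁W₂ - Y` is `½‖P R‖_F²`. The hypothesis on `X` gives
`‖XᵀR‖_F² ≥ c_X² ‖P R‖_F²`, and multiplying `XᵀR` by `W₁ᵀ` on the left or by `W₂ᵀ` on the right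
loses at most a factor `c₁²` resp. `c₂²`. Since `h ≥ m`, every `W` factors as
`[I 0] * ([I 0]ᵀ W)`, so the two infima agree.
-/

open Matrix

/-- Squared Frobenius norm `‖M‖_F² = Σᵢⱼ Mᵢⱼ²` of a real matrix. -/
noncomputable def frobSq {p q : ℕ} (M : Matrix (Fin p) (Fin q) ℝ) : ℝ :=
  ∑ i, ∑ j, (M i j) ^ 2

section
variable {E : Type*} [NormedAddCommGroup E] [InnerProductSpace ℝ E]

lemma Submodule.norm_sub_sq_eq_add_starProjection (K : Submodule ℝ E) [K.HasOrthogonalProjection]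
    {u : E} (hu : u ∈ K) (y : E) :
    ‖u - y‖ ^ 2 = ‖K.starProjection (u - y)‖ ^ 2 + ‖Kᗮ.starProjection y‖ ^ 2 := by
  rw [norm_sq_eq_add_norm_sq_starProjection (u - y) K, map_sub (Kᗮ.starProjection),
    Submodule.starProjection_orthogonal_apply_eq_zero hu, zero_sub, norm_neg]

end

lemma Function.Surjective.ciInf_comp {α ι ι' : Type*} [InfSet α] {f : ι → ι'}
    (hf : Function.Surjective f) (g : ι' → α) : ⨅ x, g (f x) = ⨅ y, g y := by
  simp only [iInf, ← hf.range_comp g]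
  rfl

namespace Matrix

variable {p q r m n : ℕ}

noncomputable def euclideanCol (M : Matrix (Fin p) (Fin q) ℝ) (j : Fin q) :
    EuclideanSpace ℝ (Fin p) :=
  WithLp.toLp 2 fun i => M i j

@[simp]
lemma euclideanCol_apply (M : Matrix (Fin p) (Fin q) ℝ) (j : Fin q) (i : Fin p) :
    euclideanCol M j i = M i j := rfl

lemma euclideanCol_sub (M N : Matrix (Fin p) (Fin q) ℝ) (j : Fin q) :
    euclideanCol (M - N) j = euclideanCol M j - euclideanCol N j := rfl

lemma euclideanCol_mul (A : Matrix (Fin p) (Fin q) ℝ) (M : Matrix (Fin q) (Fin r) ℝ)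
    (j : Fin r) : euclideanCol (A * M) j = toEuclideanLin A (euclideanCol M j) := by
  rw [euclideanCol, euclideanCol, toLpLin_toLp]
  rfl

lemma frobSq_eq_sum_norm_sq_euclideanCol (M : Matrix (Fin p) (Fin q) ℝ) :
    frobSq M = ∑ j, ‖euclideanCol M j‖ ^ 2 := by
  simp only [frobSq, EuclideanSpace.norm_sq_eq, euclideanCol_apply, Real.norm_eq_abs, sq_abs]
  exact Finset.sum_comm

lemma frobSq_transpose (M : Matrix (Fin p) (Fin q) ℝ) : frobSq Mᵀ = frobSq M :=
  Finset.sum_comm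

lemma sq_mul_sum_norm_sq_le_frobSq_mul {c : ℝ} (hc : 0 ≤ c) (A : Matrix (Fin p) (Fin q) ℝ)
    (g : EuclideanSpace ℝ (Fin q) → EuclideanSpace ℝ (Fin q))
    (hA : ∀ x, c * ‖g x‖ ≤ ‖toEuclideanLin A x‖) (M : Matrix (Fin q) (Fin r) ℝ) :
    c ^ 2 * ∑ j, ‖g (euclideanCol M j)‖ ^ 2 ≤ frobSq (A * M) := by
  rw [frobSq_eq_sum_norm_sq_euclideanCol, Finset.mul_sum]
  gcongr with j
  rw [← mul_pow, euclideanCol_mul]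
  exact pow_le_pow_left₀ (by positivity) (hA _) 2

lemma sq_mul_frobSq_le_frobSq_mul {c : ℝ} (hc : 0 ≤ c) (A : Matrix (Fin p) (Fin q) ℝ)
    (hA : ∀ x, c * ‖x‖ ≤ ‖toEuclideanLin A x‖) (M : Matrix (Fin q) (Fin r) ℝ) :
    c ^ 2 * frobSq M ≤ frobSq (A * M) := by
  simpa only [frobSq_eq_sum_norm_sq_euclideanCol, id] using
    sq_mul_sum_norm_sq_le_frobSq_mul hc A id hA M

lemma sq_mul_frobSq_le_frobSq_mul_transpose {c : ℝ} (hc : 0 ≤ c) (B : Matrix (Fin q) (Fin r) ℝ)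
    (hB : ∀ y, c * ‖y‖ ≤ ‖toEuclideanLin B y‖) (M : Matrix (Fin p) (Fin r) ℝ) :
    c ^ 2 * frobSq M ≤ frobSq (M * Bᵀ) := by
  simpa only [← frobSq_transpose M, ← frobSq_transpose (M * Bᵀ), transpose_mul,
    transpose_transpose] using sq_mul_frobSq_le_frobSq_mul hc B hB Mᵀ

lemma exists_mul_eq_of_le {h : ℕ} (hmh : m ≤ h) (W : Matrix (Fin m) (Fin n) ℝ) :
    ∃ A : Matrix (Fin m) (Fin h) ℝ, ∃ B : Matrix (Fin h) (Fin n) ℝ, A * B = W := by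
  set A : Matrix (Fin m) (Fin h) ℝ := (1 : Matrix (Fin h) (Fin h) ℝ).submatrix (Fin.castLE hmh) id
  have hA : A * Aᵀ = 1 := by
    rw [transpose_submatrix, transpose_one, ← submatrix_mul _ _ _ _ _ Function.bijective_id,
      one_mul, submatrix_one _ (Fin.castLE_injective hmh)]
  exact ⟨A, Aᵀ * W, by rw [← Matrix.mul_assoc, hA, Matrix.one_mul]⟩

section LeastSquares

variable (X : Matrix (Fin p) (Fin m) ℝ) (Y : Matrix (Fin p) (Fin n) ℝ)

noncomputable def leastSquaresResidual : ℝ :=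
  ∑ j, ‖(LinearMap.range (toEuclideanLin X))ᗮ.starProjection (euclideanCol Y j)‖ ^ 2

lemma frobSq_mul_sub_eq (W : Matrix (Fin m) (Fin n) ℝ) :
    frobSq (X * W - Y) =
      ∑ j, ‖(LinearMap.range (toEuclideanLin X)).starProjection (euclideanCol (X * W - Y) j)‖ ^ 2
        + leastSquaresResidual X Y := by
  rw [frobSq_eq_sum_norm_sq_euclideanCol, leastSquaresResidual, ← Finset.sum_add_distrib]
  refine Finset.sum_congr rfl fun j _ => ?_
  rw [euclideanCol_sub, euclideanCol_mul]
  exact Submodule.norm_sub_sq_eq_add_starProjection _ (LinearMap.mem_range_self _ _) _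

lemma leastSquaresResidual_le_frobSq_mul_sub (W : Matrix (Fin m) (Fin n) ℝ) :
    leastSquaresResidual X Y ≤ frobSq (X * W - Y) := by
  rw [frobSq_mul_sub_eq]
  exact le_add_of_nonneg_left (by positivity)

lemma exists_frobSq_mul_sub_eq_leastSquaresResidual :
    ∃ W : Matrix (Fin m) (Fin n) ℝ, frobSq (X * W - Y) = leastSquaresResidual X Y := by
  set K := LinearMap.range (toEuclideanLin X)
  choose w hw using fun j => LinearMap.mem_range.mp (K.starProjection_apply_mem (euclideanCol Y j))
  obtain ⟨W, hW⟩ : ∃ W : Matrix (Fin m) (Fin n) ℝ, ∀ j, euclideanCol W j = w j :=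
    ⟨Matrix.of fun i j => w j i, fun _ => rfl⟩
  have hproj (j : Fin n) : K.starProjection (euclideanCol (X * W - Y) j) = 0 := by
    rw [euclideanCol_sub, euclideanCol_mul, map_sub, hW, hw,
      Submodule.starProjection_eq_self_iff.mpr (K.starProjection_apply_mem _), sub_self]
  refine ⟨W, ?_⟩
  rw [frobSq_mul_sub_eq, Finset.sum_eq_zero fun j _ => ?_, zero_add]
  rw [sq_eq_zero_iff, norm_eq_zero]
  exact hproj j

lemma iInf_half_frobSq_mul_sub :
    ⨅ W : Matrix (Fin m) (Fin n) ℝ, 1 / 2 * frobSq (X * W - Y) =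
      1 / 2 * leastSquaresResidual X Y := by
  obtain ⟨W₀, hW₀⟩ := exists_frobSq_mul_sub_eq_leastSquaresResidual X Y
  have hle (W : Matrix (Fin m) (Fin n) ℝ) :
      1 / 2 * leastSquaresResidual X Y ≤ 1 / 2 * frobSq (X * W - Y) := by
    grw [leastSquaresResidual_le_frobSq_mul_sub X Y W]
  refine le_antisymm ?_ (le_ciInf hle)
  rw [← hW₀]
  exact ciInf_le ⟨_, Set.forall_mem_range.mpr hle⟩ W₀

lemma half_frobSq_mul_sub_sub_iInf (W : Matrix (Fin m) (Fin n) ℝ) :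
    1 / 2 * frobSq (X * W - Y) - ⨅ W' : Matrix (Fin m) (Fin n) ℝ, 1 / 2 * frobSq (X * W' - Y) =
      1 / 2 * ∑ j, ‖(LinearMap.range (toEuclideanLin X)).starProjection
        (euclideanCol (X * W - Y) j)‖ ^ 2 := by
  rw [iInf_half_frobSq_mul_sub, frobSq_mul_sub_eq]
  ring

lemma iInf_half_frobSq_mul_mul_sub {h : ℕ} (hmh : m ≤ h) :
    ⨅ q : Matrix (Fin m) (Fin h) ℝ × Matrix (Fin h) (Fin n) ℝ, 1 / 2 * frobSq (X * q.1 * q.2 - Y) =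
      ⨅ W : Matrix (Fin m) (Fin n) ℝ, 1 / 2 * frobSq (X * W - Y) := by
  have hsurj : Function.Surjective fun q : Matrix (Fin m) (Fin h) ℝ × Matrix (Fin h) (Fin n) ℝ =>
      q.1 * q.2 := fun W => by
    obtain ⟨A, B, hAB⟩ := exists_mul_eq_of_le hmh W
    exact ⟨(A, B), hAB⟩
  simp only [Matrix.mul_assoc]
  exact hsurj.ciInf_comp fun W => 1 / 2 * frobSq (X * W - Y)

end LeastSquares

end Matrix

/-- **Joint PL inequality along the trajectory (Lemma 2 / Theorem thm:1).**
For the two-layer least-squares loss `L(W₁,W₂) = ½‖XW₁W₂ - Y‖_F²` with `h ≥ m`,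
if `c_X` lower bounds the nonzero singular values of `X` (via `‖Xᵀv‖ ≥ c_X‖Pv‖` with `P`
the orthogonal projection onto the column space of `X`), `c₁` lower bounds the singular
values of `W₁` (via `‖W₁ᵀx‖ ≥ c₁‖x‖`) and `c₂` those of `W₂` (via `‖W₂y‖ ≥ c₂‖y‖`), then
`‖∇_{W₁}L‖_F² + ‖∇_{W₂}L‖_F² ≥ 2(c₁² + c₂²)c_X² (L(W₁,W₂) - inf L)`, where
`∇_{W₁}L = XᵀRW₂ᵀ`, `∇_{W₂}L = W₁ᵀXᵀR`, `R = XW₁W₂ - Y`; moreover the infimum over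
factored pairs equals the infimum over full matrices `W ∈ ℝ^{m×n}`. -/
theorem stmt_9 {p m n h : ℕ} (hmh : m ≤ h)
    (X : Matrix (Fin p) (Fin m) ℝ) (Y : Matrix (Fin p) (Fin n) ℝ)
    (cX c₁ c₂ : ℝ) (hcX : 0 ≤ cX) (hc₁ : 0 ≤ c₁) (hc₂ : 0 ≤ c₂)
    (hX : ∀ v : EuclideanSpace ℝ (Fin p),
      cX * ‖(Submodule.orthogonalProjectionOnto (LinearMap.range (Matrix.toEuclideanLin X)) v :
        EuclideanSpace ℝ (Fin p))‖ ≤ ‖Matrix.toEuclideanLin Xᵀ v‖)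
    (W₁ : Matrix (Fin m) (Fin h) ℝ) (W₂ : Matrix (Fin h) (Fin n) ℝ)
    (hW₁ : ∀ x : EuclideanSpace ℝ (Fin m), c₁ * ‖x‖ ≤ ‖Matrix.toEuclideanLin W₁ᵀ x‖)
    (hW₂ : ∀ y : EuclideanSpace ℝ (Fin n), c₂ * ‖y‖ ≤ ‖Matrix.toEuclideanLin W₂ y‖) :
    2 * (c₁ ^ 2 + c₂ ^ 2) * cX ^ 2 *
        (1 / 2 * frobSq (X * W₁ * W₂ - Y) -
          ⨅ q : Matrix (Fin m) (Fin h) ℝ × Matrix (Fin h) (Fin n) ℝ,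
            1 / 2 * frobSq (X * q.1 * q.2 - Y)) ≤
      frobSq (Xᵀ * (X * W₁ * W₂ - Y) * W₂ᵀ) + frobSq (W₁ᵀ * Xᵀ * (X * W₁ * W₂ - Y)) ∧
    (⨅ q : Matrix (Fin m) (Fin h) ℝ × Matrix (Fin h) (Fin n) ℝ,
        1 / 2 * frobSq (X * q.1 * q.2 - Y)) =
      ⨅ W : Matrix (Fin m) (Fin n) ℝ, 1 / 2 * frobSq (X * W - Y) := by
  have hinf := Matrix.iInf_half_frobSq_mul_mul_sub X Y hmh
  refine ⟨?_, hinf⟩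
  have hgap := Matrix.half_frobSq_mul_sub_sub_iInf X Y (W₁ * W₂)
  rw [← Matrix.mul_assoc] at hgap
  have hG := Matrix.sq_mul_sum_norm_sq_le_frobSq_mul hcX Xᵀ
    (LinearMap.range (Matrix.toEuclideanLin X)).starProjection hX (X * W₁ * W₂ - Y)
  have h₁ := Matrix.sq_mul_frobSq_le_frobSq_mul hc₁ W₁ᵀ hW₁ (Xᵀ * (X * W₁ * W₂ - Y))
  have h₂ := Matrix.sq_mul_frobSq_le_frobSq_mul_transpose hc₂ W₂ hW₂ (Xᵀ * (X * W₁ * W₂ - Y))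
  rw [hinf, hgap, Matrix.mul_assoc W₁ᵀ]
  linarith [mul_le_mul_of_nonneg_left hG (by positivity : 0 ≤ c₁ ^ 2 + c₂ ^ 2)]
end

section
/- Let E be a finite-dimensional real inner product space and L : E → ℝ a differentiable function with finite infimum L* := inf L. Suppose L is ℓ-smooth, i.e., L(z′) ≤ L(z) + ⟨∇L(z), z′ − z⟩ + (ℓ/2)‖z′ − z‖² for all z, z′ ∈ E, and μ-PL, i.e., ‖∇L(z)‖² ≥ 2μ(L(z) − L*) for all z ∈ E, where ℓ, μ > 0. Then for every z ∈ E, every δ ∈ E, and every step size α with 0 < α ≤ 1/ℓ: L(z − α(∇L(z) + δ)) − L* ≤ (1 − αμ)(L(z) − L*) + (α/2)‖δ‖². -/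
/-!
The `ℓ`-smoothness upper bound at `z`, evaluated at the inexact step `z - α (g + δ)` with
`αℓ ≤ 1`, gives the inexact descent inequality `L(z⁺) ≤ L(z) - (α/2)‖g‖² + (α/2)‖δ‖²`;
the PL inequality then trades `(α/2)‖g‖²` for `αμ (L(z) - L*)`.
-/

section

open RealInnerProductSpace

variable {E : Type*} [NormedAddCommGroup E] [InnerProductSpace ℝ E]

theorem two_mul_inner_add_right_eq (g δ : E) :
    2 * ⟪g, g + δ⟫ = ‖g‖ ^ 2 + ‖g + δ‖ ^ 2 - ‖δ‖ ^ 2 := by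
  have h := norm_sub_sq_real (g + δ) g
  rw [add_sub_cancel_left, real_inner_comm] at h
  linarith

theorem le_sub_half_norm_sq_add_half_norm_sq_of_smooth {L : E → ℝ} {z g : E} {ℓ α : ℝ}
    (hsmooth : ∀ z' : E, L z' ≤ L z + ⟪g, z' - z⟫ + ℓ / 2 * ‖z' - z‖ ^ 2)
    (hα : 0 ≤ α) (hαℓ : ℓ * α ≤ 1) (δ : E) :
    L (z - α • (g + δ)) ≤ L z - α / 2 * ‖g‖ ^ 2 + α / 2 * ‖δ‖ ^ 2 := by
  have hstep : z - α • (g + δ) - z = -(α • (g + δ)) := sub_sub_cancel_left z _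
  have hquad : ℓ / 2 * α ^ 2 ≤ α / 2 := by nlinarith
  calc L (z - α • (g + δ))
      ≤ L z - α * ⟪g, g + δ⟫ + ℓ / 2 * α ^ 2 * ‖g + δ‖ ^ 2 := by
        have h := hsmooth (z - α • (g + δ))
        rw [hstep, inner_neg_right, real_inner_smul_right, norm_neg, norm_smul,
          Real.norm_of_nonneg hα] at h
        linarith
    _ ≤ L z - α * ⟪g, g + δ⟫ + α / 2 * ‖g + δ‖ ^ 2 := by gcongr
    _ = L z - α / 2 * ‖g‖ ^ 2 + α / 2 * ‖δ‖ ^ 2 := by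
        linear_combination (-α / 2) * two_mul_inner_add_right_eq g δ

end

theorem stmt_11_general {E : Type*} [NormedAddCommGroup E] [InnerProductSpace ℝ E]
    (L : E → ℝ) (L' : E → E)
    (ℓ μ : ℝ) (hℓ : 0 < ℓ)
    (hsmooth : ∀ z z' : E,
      L z' ≤ L z + inner ℝ (L' z) (z' - z) + ℓ / 2 * ‖z' - z‖ ^ 2)
    (hPL : ∀ z : E, 2 * μ * (L z - ⨅ w : E, L w) ≤ ‖L' z‖ ^ 2) :
    ∀ (z δ : E) (α : ℝ), 0 < α → α ≤ 1 / ℓ →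
      L (z - α • (L' z + δ)) - (⨅ w : E, L w) ≤
        (1 - α * μ) * (L z - ⨅ w : E, L w) + α / 2 * ‖δ‖ ^ 2 := by
  intro z δ α hα hαℓ
  have hdescent := le_sub_half_norm_sq_add_half_norm_sq_of_smooth (hsmooth z) hα.le
    ((le_div_iff₀' hℓ).mp hαℓ) δ
  have hPL' : α / 2 * (2 * μ * (L z - ⨅ w : E, L w)) ≤ α / 2 * ‖L' z‖ ^ 2 := by
    gcongr
    exact hPL z
  linarith

/-- **One-step contraction of inexact gradient descent under smoothness and PL
(core descent estimate in the proof of Theorem 1).**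
If `L` is `ℓ`-smooth and `μ`-PL with finite infimum `L* = ⨅ L`, then for every point `z`,
bias vector `δ`, and step size `0 < α ≤ 1/ℓ`,
`L(z - α(∇L(z) + δ)) - L* ≤ (1 - αμ)(L(z) - L*) + (α/2)‖δ‖²`. -/
theorem stmt_11 {E : Type*} [NormedAddCommGroup E] [InnerProductSpace ℝ E]
    [FiniteDimensional ℝ E]
    (L : E → ℝ) (L' : E → E) (hgrad : ∀ z, HasGradientAt L (L' z) z)
    (hbdd : BddBelow (Set.range L))
    (ℓ μ : ℝ) (hℓ : 0 < ℓ) (hμ : 0 < μ)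
    (hsmooth : ∀ z z' : E,
      L z' ≤ L z + inner ℝ (L' z) (z' - z) + ℓ / 2 * ‖z' - z‖ ^ 2)
    (hPL : ∀ z : E, 2 * μ * (L z - ⨅ w : E, L w) ≤ ‖L' z‖ ^ 2) :
    ∀ (z δ : E) (α : ℝ), 0 < α → α ≤ 1 / ℓ →
      L (z - α • (L' z + δ)) - (⨅ w : E, L w) ≤
        (1 - α * μ) * (L z - ⨅ w : E, L w) + α / 2 * ‖δ‖ ^ 2 :=
  stmt_11_general L L' ℓ μ hℓ hsmooth hPL
end

section
/- Let E be a finite-dimensional real inner product space and L : E → ℝ a differentiable function with finite infimum L* := inf L, which is ℓ-smooth (L(z′) ≤ L(z) + ⟨∇L(z), z′−z⟩ + (ℓ/2)‖z′−z‖² for all z,z′) and μ-PL (‖∇L(z)‖² ≥ 2μ(L(z) − L*) for all z) with 0 < μ ≤ ℓ. Let 0 < α ≤ 1/ℓ, let δ ≥ 0, and let (z^k) be any sequence satisfying z^{k+1} = z^k − α(∇L(z^k) + δ_k) with ‖δ_k‖ ≤ δ for all k. Then for every K ≥ 0: L(z^K) − L* ≤ (1 − αμ)^K (L(z⁰) −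 L*) + δ²/(2μ). -/
/-!
For `α ≤ 1/ℓ`, smoothness gives the perturbed descent inequality
`L(z - α(g + d)) ≤ L z - (α/2)‖g‖² + (α/2)‖d‖²`, and the PL inequality turns `-(α/2)‖g‖²` into
`-αμ (L z - L*)`. So the optimality gap contracts by `1 - αμ` up to an additive `αδ²/2`, whose
fixed point is `δ²/(2μ)`; unrolling the recursion gives the bound.
-/

open RealInnerProductSpace

/-- The radius `b` is the fixed point of the recursion `t ↦ q t + (1 - q) b`. -/
theorem le_pow_mul_add_of_le_mul_add {e : ℕ → ℝ} {q b : ℝ} (hq : 0 ≤ q) (hb : 0 ≤ b)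
    (he : ∀ k, e (k + 1) ≤ q * e k + (1 - q) * b) (K : ℕ) :
    e K ≤ q ^ K * e 0 + b := by
  induction K with
  | zero => simpa using hb
  | succ K ih =>
    calc e (K + 1) ≤ q * e K + (1 - q) * b := he K
      _ ≤ q * (q ^ K * e 0 + b) + (1 - q) * b := by gcongr
      _ = q ^ (K + 1) * e 0 + b := by ring

section InexactGradientStep

variable {E : Type*} [NormedAddCommGroup E] [InnerProductSpace ℝ E]

theorem inexact_gradient_step_le {f : E → ℝ} {x g d : E} {ℓ α : ℝ}
    (hsmooth : ∀ y, f y ≤ f x + ⟪g, y - x⟫ + ℓ / 2 * ‖y - x‖ ^ 2)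
    (hα : 0 ≤ α) (hαℓ : α * ℓ ≤ 1) :
    f (x - α • (g + d)) ≤ f x - α / 2 * ‖g‖ ^ 2 + α / 2 * ‖d‖ ^ 2 := by
  have hdisp : x - α • (g + d) - x = -(α • (g + d)) := by abel
  have hinner : ⟪g, -(α • (g + d))⟫ = -(α * (‖g‖ ^ 2 + ⟪g, d⟫)) := by
    rw [inner_neg_right, real_inner_smul_right, inner_add_right, real_inner_self_eq_norm_sq]
  have hnorm : ‖-(α • (g + d))‖ ^ 2 = α ^ 2 * (‖g‖ ^ 2 + 2 * ⟪g, d⟫ + ‖d‖ ^ 2) := by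
    rw [norm_neg, norm_smul, mul_pow, Real.norm_eq_abs, sq_abs, norm_add_sq_real]
  have hquad : ℓ / 2 * (α ^ 2 * ‖g + d‖ ^ 2) ≤ α / 2 * ‖g + d‖ ^ 2 := by
    nlinarith [mul_le_mul_of_nonneg_right hαℓ (mul_nonneg hα (sq_nonneg ‖g + d‖))]
  have h := hsmooth (x - α • (g + d))
  rw [hdisp, hinner, hnorm] at h
  rw [norm_add_sq_real] at hquad
  linarith

theorem inexact_gradient_step_sub_le_of_pl {f : E → ℝ} {x g d : E} {ℓ μ α m : ℝ}
    (hsmooth : ∀ y, f y ≤ f x + ⟪g, y - x⟫ + ℓ / 2 * ‖y - x‖ ^ 2)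
    (hPL : 2 * μ * (f x - m) ≤ ‖g‖ ^ 2) (hα : 0 ≤ α) (hαℓ : α * ℓ ≤ 1) :
    f (x - α • (g + d)) - m ≤ (1 - α * μ) * (f x - m) + α / 2 * ‖d‖ ^ 2 := by
  have hdescent := inexact_gradient_step_le (d := d) hsmooth hα hαℓ
  nlinarith

end InexactGradientStep

theorem stmt_12_general {E : Type*} [NormedAddCommGroup E] [InnerProductSpace ℝ E]
    (L : E → ℝ) (L' : E → E)
    (ℓ μ : ℝ) (hμ : 0 < μ) (hμℓ : μ ≤ ℓ)
    (hsmooth : ∀ z z' : E,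
      L z' ≤ L z + inner ℝ (L' z) (z' - z) + ℓ / 2 * ‖z' - z‖ ^ 2)
    (hPL : ∀ z : E, 2 * μ * (L z - ⨅ w : E, L w) ≤ ‖L' z‖ ^ 2)
    (α δ : ℝ) (hα : 0 < α) (hαℓ : α ≤ 1 / ℓ)
    (z : ℕ → E) (δseq : ℕ → E)
    (hstep : ∀ k, z (k + 1) = z k - α • (L' (z k) + δseq k))
    (hδseq : ∀ k, ‖δseq k‖ ≤ δ) :
    ∀ K : ℕ,
      L (z K) - (⨅ w : E, L w) ≤
        (1 - α * μ) ^ K * (L (z 0) - ⨅ w : E, L w) + δ ^ 2 / (2 * μ) := by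
  have hℓ : 0 < ℓ := hμ.trans_le hμℓ
  have hαℓ' : α * ℓ ≤ 1 := by rwa [le_div_iff₀ hℓ] at hαℓ
  have hαμ : 0 ≤ 1 - α * μ := by nlinarith
  refine le_pow_mul_add_of_le_mul_add (e := fun k => L (z k) - ⨅ w, L w) hαμ
    (by positivity) fun k => ?_
  have hδk : ‖δseq k‖ ^ 2 ≤ δ ^ 2 := pow_le_pow_left₀ (norm_nonneg _) (hδseq k) 2
  calc L (z (k + 1)) - ⨅ w, L w
      ≤ (1 - α * μ) * (L (z k) - ⨅ w, L w) + α / 2 * ‖δseq k‖ ^ 2 := by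
        rw [hstep k]
        exact inexact_gradient_step_sub_le_of_pl (hsmooth (z k)) (hPL (z k))
          hα.le hαℓ'
    _ ≤ (1 - α * μ) * (L (z k) - ⨅ w, L w) + (1 - (1 - α * μ)) * (δ ^ 2 / (2 * μ)) := by
        rw [show (1 - (1 - α * μ)) * (δ ^ 2 / (2 * μ)) = α / 2 * δ ^ 2 by field_simp; ring]
        gcongr

/-- **Linear convergence of inexact gradient descent up to a bias error ball
(telescoped estimate from the proof of Theorem 1).**
If `L` is `ℓ`-smooth and `μ`-PL with `0 < μ ≤ ℓ` and finite infimum `L* = ⨅ L`, and `(z k)`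
follows `z^{k+1} = z^k - α(∇L(z^k) + δ_k)` with `0 < α ≤ 1/ℓ` and `‖δ_k‖ ≤ δ`, then for
every `K`, `L(z^K) - L* ≤ (1 - αμ)^K (L(z⁰) - L*) + δ²/(2μ)`. -/
theorem stmt_12 {E : Type*} [NormedAddCommGroup E] [InnerProductSpace ℝ E]
    [FiniteDimensional ℝ E]
    (L : E → ℝ) (L' : E → E) (hgrad : ∀ z, HasGradientAt L (L' z) z)
    (hbdd : BddBelow (Set.range L))
    (ℓ μ : ℝ) (hμ : 0 < μ) (hμℓ : μ ≤ ℓ)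
    (hsmooth : ∀ z z' : E,
      L z' ≤ L z + inner ℝ (L' z) (z' - z) + ℓ / 2 * ‖z' - z‖ ^ 2)
    (hPL : ∀ z : E, 2 * μ * (L z - ⨅ w : E, L w) ≤ ‖L' z‖ ^ 2)
    (α δ : ℝ) (hα : 0 < α) (hαℓ : α ≤ 1 / ℓ) (hδ : 0 ≤ δ)
    (z : ℕ → E) (δseq : ℕ → E)
    (hstep : ∀ k, z (k + 1) = z k - α • (L' (z k) + δseq k))
    (hδseq : ∀ k, ‖δseq k‖ ≤ δ) :
    ∀ K : ℕ,
      L (z K) - (⨅ w : E, L w) ≤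
        (1 - α * μ) ^ K * (L (z 0) - ⨅ w : E, L w) + δ ^ 2 / (2 * μ) :=
  stmt_12_general L L' ℓ μ hμ hμℓ hsmooth hPL α δ hα hαℓ z δseq hstep hδseq
end
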